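/- arXiv:math/0412405 — 3 statements merged into one kernel-verified Lean document; each statement's English description precedes it below -/
import Mathlib

section
/- In the group of unit quaternions modulo ±1 (i.e. SU(2)/Z₂), set ρ(l₁) = ±i, ρ(l₂) = ±j, ρ(l₃) = ±k·exp(π(i cos φ + j sin φ)/3), ρ(l₄) = ±exp(−π(i cos φ + j sin φ)/3) for a real parameter φ. Then ρ(l₁)ρ(l₂)ρ(l₃)ρ(l₄) = ±1, ρ(l₁)² = ρ(l₂)² = ρ(l₃)² = ±1, and ρ(l₄)³ = ±1, so ρ defines a homomorphism from the group ⟨l₁,l₂,l₃,l₄ : l₁l₂l₃l₄ = l₁² = l₂² = l₃² = l₄³ = 1⟩ to SU(2)/Z₂. -/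
/-!
Write `u = (π/3) v` with `v = cos φ i + sin φ j`, a purely imaginary unit quaternion. Since `k`
anticommutes with `v`, conjugating by `k` turns `exp u` into `exp (-u)`; hence
`q₃² = exp (-u) k² exp u = -1` and `q₁q₂q₃q₄ = ijk · exp u exp (-u) = -1`. Finally Euler's formula
`exp (t v) = cos t + (sin t) v` gives `q₄³ = exp (π (-v)) = -1`.
-/

open Quaternion NormedSpace

namespace Quaternion

theorem exp_real_smul_of_re_eq_zero {v : ℍ[ℝ]} (hre : v.re = 0) (hnorm : ‖v‖ = 1) (t : ℝ) :
    exp (t • v) = ↑(Real.cos t) + Real.sin t • v := by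
  have hsinc : Real.sin |t| / |t| * t = Real.sin t := by
    rcases abs_choice t with h | h <;> rw [h]
    · exact div_mul_cancel_of_imp fun ht ↦ by rw [ht, Real.sin_zero]
    · rw [Real.sin_neg, neg_div_neg_eq]
      exact div_mul_cancel_of_imp fun ht ↦ by rw [ht, Real.sin_zero]
  rw [exp_of_re_eq_zero _ (by simp [hre]), norm_smul, hnorm, mul_one, Real.norm_eq_abs,
    smul_smul, hsinc, Real.cos_abs]

theorem exp_pi_smul_of_re_eq_zero {v : ℍ[ℝ]} (hre : v.re = 0) (hnorm : ‖v‖ = 1) :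
    exp (Real.pi • v) = -1 := by
  rw [exp_real_smul_of_re_eq_zero hre hnorm, Real.cos_pi, Real.sin_pi, zero_smul, add_zero]
  norm_num

section

-- `ℍ[ℝ]` has no global `NormedAlgebra ℚ` instance, which the addition formulas for `exp` need;
-- `exp` itself does not depend on it.
noncomputable local instance : NormedAlgebra ℚ ℍ[ℝ] := .restrictScalars ℚ ℝ ℍ[ℝ]

theorem exp_mul_exp_neg (x : ℍ[ℝ]) : exp x * exp (-x) = 1 := by
  rw [← exp_add_of_commute (Commute.refl x).neg_right, add_neg_cancel, exp_zero]

theorem exp_neg_mul_exp (x : ℍ[ℝ]) : exp (-x) * exp x = 1 := by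
  simpa using exp_mul_exp_neg (-x)

theorem mul_exp_of_mul_eq_neg_mul {w x : ℍ[ℝ]} (h : w * x = -x * w) :
    w * exp x = exp (-x) * w :=
  SemiconjBy.exp_right h

theorem exp_pi_div_smul_pow_of_re_eq_zero {v : ℍ[ℝ]} (hre : v.re = 0) (hnorm : ‖v‖ = 1) {n : ℕ}
    (hn : n ≠ 0) : exp ((Real.pi / n) • v) ^ n = -1 := by
  rw [← exp_nsmul, ← Nat.cast_smul_eq_nsmul ℝ, smul_smul, mul_div_cancel₀ _ (Nat.cast_ne_zero.2 hn),
    exp_pi_smul_of_re_eq_zero hre hnorm]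

end

end Quaternion

/-- In the unit quaternions (identified with SU(2)), with
`q₁ = i`, `q₂ = j`, `q₃ = k·exp(π(i cos φ + j sin φ)/3)`,
`q₄ = exp(−π(i cos φ + j sin φ)/3)`, the relations of the orbifold fundamental
group of the (2,2,2,3)-sphere hold up to sign:
`q₁q₂q₃q₄ = ±1`, `q₁² = q₂² = q₃² = ±1`, `q₄³ = ±1`.  Hence
`l₁ ↦ ±q₁, l₂ ↦ ±q₂, l₃ ↦ ±q₃, l₄ ↦ ±q₄` defines a homomorphism
`⟨l₁,l₂,l₃,l₄ : l₁l₂l₃l₄ = l₁² = l₂² = l₃² = l₄³ = 1⟩ → SU(2)/ℤ₂`. -/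
theorem stmt7 (φ : ℝ)
    (i' j' k' u q₁ q₂ q₃ q₄ : ℍ[ℝ])
    (hi : i' = ⟨0, 1, 0, 0⟩) (hj : j' = ⟨0, 0, 1, 0⟩) (hk : k' = ⟨0, 0, 0, 1⟩)
    (hu : u = (Real.pi / 3) • (Real.cos φ • i' + Real.sin φ • j'))
    (h₁ : q₁ = i') (h₂ : q₂ = j')
    (h₃ : q₃ = k' * NormedSpace.exp u)
    (h₄ : q₄ = NormedSpace.exp (-u)) :
    (q₁ * q₂ * q₃ * q₄ = 1 ∨ q₁ * q₂ * q₃ * q₄ = -1) ∧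
    (q₁ ^ 2 = 1 ∨ q₁ ^ 2 = -1) ∧ (q₂ ^ 2 = 1 ∨ q₂ ^ 2 = -1) ∧
    (q₃ ^ 2 = 1 ∨ q₃ ^ 2 = -1) ∧ (q₄ ^ 3 = 1 ∨ q₄ ^ 3 = -1) := by
  replace hi : i'.re = 0 ∧ i'.imI = 1 ∧ i'.imJ = 0 ∧ i'.imK = 0 := Quaternion.ext_iff.1 hi
  replace hj : j'.re = 0 ∧ j'.imI = 0 ∧ j'.imJ = 1 ∧ j'.imK = 0 := Quaternion.ext_iff.1 hj
  replace hk : k'.re = 0 ∧ k'.imI = 0 ∧ k'.imJ = 0 ∧ k'.imK = 1 := Quaternion.ext_iff.1 hk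
  set v := Real.cos φ • i' + Real.sin φ • j' with hv
  have hv_re : (-v).re = 0 := by simp [hv, hi, hj]
  have hv_norm : ‖-v‖ = 1 := by
    rw [← pow_eq_one_iff_of_nonneg (norm_nonneg _) two_ne_zero, sq, ← normSq_eq_norm_mul_self,
      normSq_def']
    simp [hv, hi, hj]
  have hi2 : i' * i' = -1 := by ext <;> simp [hi]
  have hj2 : j' * j' = -1 := by ext <;> simp [hj]
  have hk2 : k' * k' = -1 := by ext <;> simp [hk]
  have hijk : i' * j' * k' = -1 := by ext <;> simp [hi, hj, hk]
  have hku : k' * u = -u * k' := by ext <;> simp [hi, hj, hk, hu, hv]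
  refine ⟨Or.inr ?_, Or.inr (by rw [h₁, sq, hi2]), Or.inr (by rw [h₂, sq, hj2]), Or.inr ?_,
    Or.inr ?_⟩
  · calc q₁ * q₂ * q₃ * q₄ = i' * j' * k' * (exp u * exp (-u)) := by
          rw [h₁, h₂, h₃, h₄]; simp only [mul_assoc]
      _ = -1 := by rw [hijk, exp_mul_exp_neg, mul_one]
  · calc q₃ ^ 2 = exp (-u) * (k' * k') * exp u := by
          rw [sq, h₃]
          nth_rw 1 [mul_exp_of_mul_eq_neg_mul hku]
          simp only [mul_assoc]
      _ = -1 := by rw [hk2, mul_neg_one, neg_mul, exp_neg_mul_exp]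
  · rw [h₄, hu, ← smul_neg]
    simpa using exp_pi_div_smul_pow_of_re_eq_zero hv_re hv_norm three_ne_zero
end

section
/- In the unit quaternions, set A = exp(πk/4)·i, B = j, L = k. Then the commutator [A,B]·L = A B A⁻¹ B⁻¹ L equals ±1 and L² = −1. Hence a ↦ ±A, b ↦ ±B, l ↦ ±L defines a homomorphism from ⟨a, b, l : [a,b]l = l² = 1⟩ to SU(2)/Z₂. -/
open Quaternion

/-! `A = exp(πk/4) i = (i + j)/√2` and `B = j` are purely imaginary unit quaternions, so
`A⁻¹ = -A`, `B⁻¹ = -B` and the commutator `[A, B]` is `(AB)²`. Since `AB = (k - 1)/√2`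
squares to `-k`, we get `[A, B] k = -k² = 1`. -/

namespace Quaternion

section PureUnit

variable {R : Type*} [Field R] [LinearOrder R] [IsStrictOrderedRing R] {u v : ℍ[R]}

theorem sq_eq_neg_one_of_re_eq_zero (hre : u.re = 0) (hu : normSq u = 1) : u ^ 2 = -1 := by
  rw [sq_eq_neg_normSq.mpr hre, hu, coe_one]

theorem inv_eq_neg_of_re_eq_zero (hre : u.re = 0) (hu : normSq u = 1) : u⁻¹ = -u :=
  inv_eq_of_mul_eq_one_right <| by rw [mul_neg, ← sq, sq_eq_neg_one_of_re_eq_zero hre hu, neg_neg]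

theorem commutator_eq_sq_of_re_eq_zero (hu : u.re = 0) (hu1 : normSq u = 1) (hv : v.re = 0)
    (hv1 : normSq v = 1) : u * v * u⁻¹ * v⁻¹ = (u * v) ^ 2 := by
  simp only [inv_eq_neg_of_re_eq_zero hu hu1, inv_eq_neg_of_re_eq_zero hv hv1, mul_neg, neg_neg,
    neg_mul, sq, ← mul_assoc]

end PureUnit

theorem exp_smul_of_re_eq_zero (θ : ℝ) {u : ℍ[ℝ]} (hre : u.re = 0) (hu : ‖u‖ = 1) :
    NormedSpace.exp (θ • u) = ↑(Real.cos θ) + Real.sin θ • u := by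
  rw [exp_of_re_eq_zero _ (by simp [hre]), norm_smul, hu, mul_one, Real.norm_eq_abs, Real.cos_abs,
    smul_smul]
  congr 2
  rcases abs_choice θ with h | h <;> rw [h]
  · exact div_mul_cancel_of_imp fun h0 => by rw [h0, Real.sin_zero]
  · rw [Real.sin_neg, neg_div_neg_eq]
    exact div_mul_cancel_of_imp fun h0 => by rw [h0, Real.sin_zero]

end Quaternion

/-- In the unit quaternions, with `A = exp(πk/4)·i`, `B = j`,
`L = k`, one has `[A,B]·L = A B A⁻¹ B⁻¹ L = ±1` and `L² = −1`.  Hence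
`a ↦ ±A, b ↦ ±B, l ↦ ±L` defines a homomorphism from the orbifold fundamental
group `⟨a, b, l : [a,b]l = l² = 1⟩` of the one-punctured torus to SU(2)/ℤ₂. -/
theorem stmt8 (i' j' k' A B L : ℍ[ℝ])
    (hi : i' = ⟨0, 1, 0, 0⟩) (hj : j' = ⟨0, 0, 1, 0⟩) (hk : k' = ⟨0, 0, 0, 1⟩)
    (hA : A = NormedSpace.exp ((Real.pi / 4) • k') * i')
    (hB : B = j') (hL : L = k') :
    (A * B * A⁻¹ * B⁻¹ * L = 1 ∨ A * B * A⁻¹ * B⁻¹ * L = -1) ∧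
    L ^ 2 = -1 := by
  obtain ⟨hi0, hi1, hi2, hi3⟩ : i'.re = 0 ∧ i'.imI = 1 ∧ i'.imJ = 0 ∧ i'.imK = 0 := by
    subst hi; exact ⟨rfl, rfl, rfl, rfl⟩
  obtain ⟨hj0, hj1, hj2, hj3⟩ : j'.re = 0 ∧ j'.imI = 0 ∧ j'.imJ = 1 ∧ j'.imK = 0 := by
    subst hj; exact ⟨rfl, rfl, rfl, rfl⟩
  obtain ⟨hk0, hk1, hk2, hk3⟩ : k'.re = 0 ∧ k'.imI = 0 ∧ k'.imJ = 0 ∧ k'.imK = 1 := by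
    subst hk; exact ⟨rfl, rfl, rfl, rfl⟩
  have hj_normSq : normSq j' = 1 := by simp [normSq_def', hj0, hj1, hj2, hj3]
  have hk_normSq : normSq k' = 1 := by simp [normSq_def', hk0, hk1, hk2, hk3]
  have hk_norm : ‖k'‖ = 1 := by
    rw [← pow_eq_one_iff_of_nonneg (norm_nonneg _) two_ne_zero, sq, ← normSq_eq_norm_mul_self,
      hk_normSq]
  have hki : k' * i' = j' := by
    ext <;> simp [hi0, hi1, hi2, hi3, hj0, hj1, hj2, hj3, hk0, hk1, hk2, hk3]
  have hA' : A = (Real.sqrt 2 / 2) • (i' + j') := by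
    rw [hA, exp_smul_of_re_eq_zero _ hk0 hk_norm, add_mul, coe_mul_eq_smul, smul_mul_assoc, hki,
      Real.cos_pi_div_four, Real.sin_pi_div_four, smul_add]
  have hA_re : A.re = 0 := by simp [hA', hi0, hj0]
  have hA_normSq : normSq A = 1 := by
    rw [hA', normSq_smul]
    norm_num [div_pow, normSq_def', hi0, hi1, hi2, hi3, hj0, hj1, hj2, hj3]
  subst hB hL
  refine ⟨Or.inl ?_, sq_eq_neg_one_of_re_eq_zero hk0 hk_normSq⟩
  rw [commutator_eq_sq_of_re_eq_zero hA_re hA_normSq hj0 hj_normSq, hA']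
  ext <;> norm_num [sq, div_mul_div_comm,
    hi0, hi1, hi2, hi3, hj0, hj1, hj2, hj3, hk0, hk1, hk2, hk3]
end

section
/- The representation l₁ ↦ ±i, l₂ ↦ ±j, l₃ ↦ ±k·exp(π i/3), l₄ ↦ ±exp(−π i/3) of the orbifold fundamental group of the (2,2,2,3)-sphere into SU(2)/Z₂ is irreducible: the induced action on CP¹ (equivalently, the induced rotation action on the 2-sphere) has no common fixed point. -/
open Quaternion

/-! Conjugation by `q ≠ 0` fixes `v` exactly when `q` and `v` commute. A purely imaginary
quaternion commuting with `i` and with `j` has no `j`-, `k`- or `i`-component, so already the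
half-turns `l₁ ↦ ±i` and `l₂ ↦ ±j`, about orthogonal axes, have no common fixed point. -/

theorem mul_mul_inv_eq_self_iff_commute {G₀ : Type*} [GroupWithZero G₀] {q v : G₀}
    (hq : q ≠ 0) : q * v * q⁻¹ = v ↔ Commute q v :=
  mul_inv_eq_iff_eq_mul₀ hq

namespace Quaternion

variable {R : Type*} [CommRing R] [NoZeroDivisors R] [CharZero R] {v : ℍ[R]}

theorem commute_i_iff : Commute (⟨0, 1, 0, 0⟩ : ℍ[R]) v ↔ v.imJ = 0 ∧ v.imK = 0 := by
  obtain ⟨a, b, c, d⟩ := v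
  simp only [Commute, SemiconjBy, QuaternionAlgebra.mk_mul_mk,
    QuaternionAlgebra.mk.injEq]
  ring_nf
  simp [CharZero.neg_eq_self_iff, CharZero.eq_neg_self_iff, and_comm]

theorem commute_j_iff : Commute (⟨0, 0, 1, 0⟩ : ℍ[R]) v ↔ v.imI = 0 ∧ v.imK = 0 := by
  obtain ⟨a, b, c, d⟩ := v
  simp only [Commute, SemiconjBy, QuaternionAlgebra.mk_mul_mk,
    QuaternionAlgebra.mk.injEq]
  ring_nf
  simp [CharZero.neg_eq_self_iff, CharZero.eq_neg_self_iff, and_comm]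

theorem eq_zero_of_re_eq_zero_of_commute_i_of_commute_j (hre : v.re = 0)
    (hi : Commute (⟨0, 1, 0, 0⟩ : ℍ[R]) v) (hj : Commute (⟨0, 0, 1, 0⟩ : ℍ[R]) v) :
    v = 0 := by
  obtain ⟨hJ, hK⟩ := commute_i_iff.1 hi
  obtain ⟨hI, -⟩ := commute_j_iff.1 hj
  ext <;> assumption

end Quaternion

theorem stmt9_general (i' j' q₁ q₂ q₃ q₄ : ℍ[ℝ])
    (hi : i' = ⟨0, 1, 0, 0⟩) (hj : j' = ⟨0, 0, 1, 0⟩)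
    (h₁ : q₁ = i') (h₂ : q₂ = j') :
    ¬ ∃ v : ℍ[ℝ], v ≠ 0 ∧ v.re = 0 ∧
      q₁ * v * q₁⁻¹ = v ∧ q₂ * v * q₂⁻¹ = v ∧
      q₃ * v * q₃⁻¹ = v ∧ q₄ * v * q₄⁻¹ = v := by
  rintro ⟨v, hv, hre, hfix₁, hfix₂, -⟩
  subst hi hj h₁ h₂
  refine hv (eq_zero_of_re_eq_zero_of_commute_i_of_commute_j hre ?_ ?_)
  -- `⟨0, 1, 0, 0⟩` elaborates at the unfolded type `QuaternionAlgebra ℝ (-1) 0 (-1)`, which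
  -- carries no `GroupWithZero` instance, hence the explicit `G₀`.
  · refine (mul_mul_inv_eq_self_iff_commute (G₀ := ℍ[ℝ]) fun h => ?_).1 hfix₁
    exact one_ne_zero (congrArg QuaternionAlgebra.imI h)
  · refine (mul_mul_inv_eq_self_iff_commute (G₀ := ℍ[ℝ]) fun h => ?_).1 hfix₂
    exact one_ne_zero (congrArg QuaternionAlgebra.imJ h)

/-- The representation `l₁ ↦ ±i`, `l₂ ↦ ±j`, `l₃ ↦ ±k·exp(πi/3)`,
`l₄ ↦ ±exp(−πi/3)` of the orbifold fundamental group of the (2,2,2,3)-sphere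
into SU(2)/ℤ₂ is irreducible: no nonzero purely imaginary quaternion (i.e. no
nonzero vector of ℝ³, equivalently no point of ℂP¹) is fixed by all of the
induced rotations `v ↦ q v q⁻¹`. -/
theorem stmt9 (i' j' k' q₁ q₂ q₃ q₄ : ℍ[ℝ])
    (hi : i' = ⟨0, 1, 0, 0⟩) (hj : j' = ⟨0, 0, 1, 0⟩) (hk : k' = ⟨0, 0, 0, 1⟩)
    (h₁ : q₁ = i') (h₂ : q₂ = j')
    (h₃ : q₃ = k' * NormedSpace.exp ((Real.pi / 3) • i'))
    (h₄ : q₄ = NormedSpace.exp (-((Real.pi / 3) • i'))) :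
    ¬ ∃ v : ℍ[ℝ], v ≠ 0 ∧ v.re = 0 ∧
      q₁ * v * q₁⁻¹ = v ∧ q₂ * v * q₂⁻¹ = v ∧
      q₃ * v * q₃⁻¹ = v ∧ q₄ * v * q₄⁻¹ = v :=
  stmt9_general i' j' q₁ q₂ q₃ q₄ hi hj h₁ h₂
end
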